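/- arXiv:1311.3571 — 2 statements merged into one kernel-verified Lean document; each statement's English description precedes it below -/
import Mathlib

section
/- Let k ≥ 1 and let a_1, a_2, …, a_n ∈ A be such that for each i, a_i ∈ A(100^{k²}·p_i − 1) for some positive integer p_i, and a_i ∉ B_1 + … + B_k. Then for all non-negative integers m_1, …, m_n, the product a_1x_{m_1}a_2x_{m_2}⋯x_{m_{n−1}}a_nx_{m_n} does not belong to B_1 + … + B_k. -/
noncomputable section

/-- `A¹`: the free unital associative algebra over `K` on generators `x_0, x_1, x_2, …`,
realized as the monoid algebra of the free monoid on `ℕ`.  The free *non-unital*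
algebra `A` sits inside it as the span of the monomials of positive length. -/
abbrev FA (K : Type) [Field K] : Type := MonoidAlgebra K (FreeMonoid ℕ)

/-- The monomial `x_{i₁} x_{i₂} ⋯ x_{iₙ}` corresponding to the list `[i₁, …, iₙ]`. -/
def mon (K : Type) [Field K] (l : List ℕ) : FA K :=
  MonoidAlgebra.single (FreeMonoid.ofList l) 1

/-- The generator `x_i`. -/
def xg (K : Type) [Field K] (i : ℕ) : FA K := mon K [i]

/-- `A(n)`: the `K`-linear span of the monomials of length `n`. -/
def Agr (K : Type) [Field K] (n : ℕ) : Submodule K (FA K) :=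
  Submodule.span K {a | ∃ l : List ℕ, l.length = n ∧ a = mon K l}

/-- The free non-unital algebra `A`: the span of monomials of positive length. -/
def Apos (K : Type) [Field K] : Submodule K (FA K) :=
  Submodule.span K {a | ∃ l : List ℕ, l ≠ [] ∧ a = mon K l}

/-- `D` is the `K`-derivation with `D(x_i) = x_{i+1}` for every `i`. -/
def IsDer (K : Type) [Field K] (D : FA K →ₗ[K] FA K) : Prop :=
  (∀ a b : FA K, D (a * b) = D a * b + a * D b) ∧ ∀ i : ℕ, D (xg K i) = xg K (i + 1)

/-- `W(k, n, t)`:  `W(k,n,0)` is the set of monomials of length `n` in the letters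
`x_0, …, x_{k-1}`, and `W(k,n,t+1) = D(W(k,n,t))`. -/
def WsetL (K : Type) [Field K] (D : FA K →ₗ[K] FA K) (k n : ℕ) : ℕ → Set (FA K)
  | 0 => {a | ∃ l : List ℕ, l.length = n ∧ (∀ i ∈ l, i < k) ∧ a = mon K l}
  | t + 1 => D '' WsetL K D k n t

/-- `W(k, n) = ⋃ₜ W(k, n, t)`. -/
def Wset (K : Type) [Field K] (D : FA K →ₗ[K] FA K) (k n : ℕ) : Set (FA K) :=
  ⋃ t, WsetL K D k n t

/-- `I_k`: the two-sided ideal of `A` generated by `W(k, 2·100^{k²})`. -/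
def Ik (K : Type) [Field K] (D : FA K →ₗ[K] FA K) (k : ℕ) : Submodule K (FA K) :=
  Submodule.span K
    {a | ∃ u v w : FA K, w ∈ Wset K D k (2 * 100 ^ (k ^ 2)) ∧ a = u * w * v}

/-- `I = Σ_{k > 0} I_k`. -/
def Itot (K : Type) [Field K] (D : FA K →ₗ[K] FA K) : Submodule K (FA K) :=
  ⨆ k : ℕ, ⨆ _ : 1 ≤ k, Ik K D k

/-- `W_k = Σ_{m ≥ 0} A(m·100^{k²}) · W(k, 100^{k²}) · A¹`. -/
def Wk (K : Type) [Field K] (D : FA K →ₗ[K] FA K) (k : ℕ) : Submodule K (FA K) :=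
  Submodule.span K {a | ∃ (l : List ℕ) (w v : FA K),
    (∃ m : ℕ, l.length = m * 100 ^ (k ^ 2)) ∧ w ∈ Wset K D k (100 ^ (k ^ 2)) ∧
    a = mon K l * w * v}

/-- The set `Z_k`.  Here the letter of a monomial `s` in (1-indexed) position
`j` is `l[j-1]?` for the corresponding list `l`. -/
def Zset (K : Type) [Field K] (k : ℕ) : Set (FA K) :=
  {a | (∃ (κ : K) (l : List ℕ) (p q : ℕ), p < q ∧ q ≤ k ∧
          l.length = 100 ^ (k ^ 2) - 1 ∧
          l[3 ^ p * 100 ^ ((k - 1) ^ 2) - 1]? = l[3 ^ q * 100 ^ ((k - 1) ^ 2) - 1]? ∧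
          a = κ • mon K l) ∨
      (∃ (κ : K) (l₁ l₂ : List ℕ) (p q e₁ e₂ : ℕ), p < q ∧ q ≤ k ∧ e₂ < e₁ ∧ 0 < e₂ ∧
          l₁.length = 100 ^ (k ^ 2) - 1 ∧ l₂.length = 100 ^ (k ^ 2) - 1 ∧
          l₁[3 ^ p * 100 ^ ((k - 1) ^ 2) - 1]? = some e₁ ∧
          l₁[3 ^ q * 100 ^ ((k - 1) ^ 2) - 1]? = some e₂ ∧
          l₂[3 ^ p * 100 ^ ((k - 1) ^ 2) - 1]? = some e₂ ∧
          l₂[3 ^ q * 100 ^ ((k - 1) ^ 2) - 1]? = some e₁ ∧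
          (∀ j : ℕ, j + 1 ≠ 3 ^ p * 100 ^ ((k - 1) ^ 2) →
            j + 1 ≠ 3 ^ q * 100 ^ ((k - 1) ^ 2) → l₁[j]? = l₂[j]?) ∧
          a = κ • (mon K l₁ + mon K l₂))}

/-- `B_k = Σ_{m ≥ 0} A(m·100^{k²}) · Z_k · A¹`. -/
def Bk (K : Type) [Field K] (k : ℕ) : Submodule K (FA K) :=
  Submodule.span K {a | ∃ (l : List ℕ) (z v : FA K),
    (∃ m : ℕ, l.length = m * 100 ^ (k ^ 2)) ∧ z ∈ Zset K k ∧ a = mon K l * z * v}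

/-- `B_1 + B_2 + ⋯ + B_k`. -/
def Bsum (K : Type) [Field K] (k : ℕ) : Submodule K (FA K) :=
  ∑ i ∈ Finset.Icc 1 k, Bk K i

/-- The coefficients `a_j^{(m)}` of `(x_0 X)^m = Σ_j a_j^{(m)} X^j` in `A¹[X; D]`:
`a_0^{(0)} = 1`, `a_j^{(0)} = 0` for `j > 0`, and
`a_j^{(m+1)} = x_0 (a_{j-1}^{(m)} + D(a_j^{(m)}))` (with `a_{-1}^{(m)} = 0`). -/
def acoef (K : Type) [Field K] (D : FA K →ₗ[K] FA K) : ℕ → ℕ → FA K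
  | 0, 0 => 1
  | 0, _ + 1 => 0
  | m + 1, 0 => xg K 0 * D (acoef K D m 0)
  | m + 1, j + 1 => xg K 0 * (acoef K D m j + D (acoef K D m (j + 1)))

/-! Choose functionals `φᵢ` vanishing on `B_1 + ⋯ + B_k` with `φᵢ(aᵢ) ≠ 0`, and put
`N = 100^{k²}`. Cut a word into consecutive blocks of lengths `N pᵢ`; a linear functional
sends it to `∏ φᵢ(block i without its last letter)` when the last letter of block `i` is
`x_{mᵢ}` for every `i` and nothing is left over, and to `0` otherwise. On the product it
takes the value `∏ φᵢ(aᵢ) ≠ 0`. In a generator `u z v` of `B_j` with `j ≤ k`, the factor `z`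
has length `100^{j²} - 1` and starts at a multiple of `100^{j²}`, which divides every block
length; so `z` sits inside a single block, before its last letter, and the functional
factors through `φᵢ` applied to an element of `B_j`, which is `0`. -/

section BlockFunctional

variable {K : Type} [Field K]

theorem mon_mul (l₁ l₂ : List ℕ) : mon K l₁ * mon K l₂ = mon K (l₁ ++ l₂) := by
  rw [mon, mon, mon, MonoidAlgebra.single_mul_single, FreeMonoid.ofList_append, one_mul]

theorem mon_nil : mon K [] = 1 := rfl

theorem mon_mem_Agr (l : List ℕ) : mon K l ∈ Agr K l.length :=
  Submodule.subset_span ⟨l, rfl, rfl⟩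

theorem mul_mem_Agr {i j : ℕ} {x y : FA K} (hx : x ∈ Agr K i) (hy : y ∈ Agr K j) :
    x * y ∈ Agr K (i + j) := by
  suffices h : Agr K i * Agr K j ≤ Agr K (i + j) from h (Submodule.mul_mem_mul hx hy)
  rw [Agr, Agr, Submodule.span_mul_span]
  refine Submodule.span_mono ?_
  rintro _ ⟨_, ⟨u, hu, rfl⟩, _, ⟨v, hv, rfl⟩, rfl⟩
  exact ⟨u ++ v, by rw [List.length_append, hu, hv], mon_mul u v⟩

theorem linearMap_ext_mon {M : Type*} [AddCommMonoid M] [Module K M] {f g : FA K →ₗ[K] M}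
    (h : ∀ l, f (mon K l) = g (mon K l)) : f = g := by
  ext w
  simpa [mon] using h w.toList

/-- A block of `len` letters, read by `eval` and followed by the letter `x_sep`. -/
structure Block (K : Type) [Field K] where
  len : ℕ
  eval : FA K →ₗ[K] K
  sep : ℕ

def wordEval : List (Block K) → List ℕ → K
  | [], w => if w = [] then 1 else 0
  | b :: S, w => b.eval (mon K (w.take b.len)) *
      if w[b.len]? = some b.sep then wordEval S (w.drop (b.len + 1)) else 0

def blockFunctional (S : List (Block K)) : FA K →ₗ[K] K :=
  Finsupp.linearCombination K (fun w : FreeMonoid ℕ => wordEval S w.toList) ∘ₗ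
    (MonoidAlgebra.coeffLinearEquiv K).toLinearMap

theorem blockFunctional_mon (S : List (Block K)) (l : List ℕ) :
    blockFunctional S (mon K l) = wordEval S l := by
  simp [blockFunctional, mon]

theorem blockFunctional_nil_one : blockFunctional [] (1 : FA K) = 1 := by
  rw [← mon_nil, blockFunctional_mon, wordEval, if_pos rfl]

theorem blockFunctional_nil_eq_zero {e : ℕ} (he : 0 < e) {y : FA K} (hy : y ∈ Agr K e) :
    blockFunctional [] y = 0 := by
  refine LinearMap.eqOn_span (f := blockFunctional []) (g := 0) ?_ hy
  rintro _ ⟨u, rfl, rfl⟩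
  simp [blockFunctional_mon, wordEval, List.ne_nil_of_length_pos he]

theorem wordEval_cons_append (b : Block K) (S : List (Block K)) {u : List ℕ}
    (hu : u.length = b.len + 1) (r : List ℕ) :
    wordEval (b :: S) (u ++ r) = wordEval [b] u * wordEval S r := by
  have hd : b.len < u.length := by omega
  simp only [wordEval, List.take_append_of_le_length hd.le, List.getElem?_append_left hd,
    List.drop_append_of_le_length hu.ge, List.drop_eq_nil_of_le hu.le, List.nil_append]
  split_ifs <;> simp

theorem wordEval_cons_append_of_length_le (b : Block K) (S : List (Block K)) {u : List ℕ}
    (hu : u.length ≤ b.len) (r : List ℕ) :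
    wordEval (b :: S) (u ++ r) = b.eval (mon K (u ++ r.take (b.len - u.length))) *
      if r[b.len - u.length]? = some b.sep then wordEval S (r.drop (b.len - u.length + 1))
      else 0 := by
  simp only [wordEval, List.take_append, List.getElem?_append_right hu, List.drop_append,
    List.take_of_length_le hu, List.drop_eq_nil_of_le (by omega : u.length ≤ b.len + 1),
    List.nil_append, Nat.sub_add_comm hu]

theorem blockFunctional_cons_mon_mul (b : Block K) (S : List (Block K)) {u : List ℕ}
    (hu : u.length = b.len + 1) (v : FA K) :
    blockFunctional (b :: S) (mon K u * v) =
      blockFunctional [b] (mon K u) * blockFunctional S v := by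
  refine LinearMap.congr_fun (linearMap_ext_mon (f := (blockFunctional (b :: S)).comp
    (LinearMap.mulLeft K (mon K u))) (g := blockFunctional [b] (mon K u) • blockFunctional S)
    fun r => ?_) v
  simp [mon_mul, blockFunctional_mon, wordEval_cons_append b S hu]

theorem blockFunctional_cons_mul (b : Block K) (S : List (Block K)) {y : FA K}
    (hy : y ∈ Agr K (b.len + 1)) (v : FA K) :
    blockFunctional (b :: S) (y * v) = blockFunctional [b] y * blockFunctional S v := by
  refine LinearMap.eqOn_span (f := (blockFunctional (b :: S)).comp (LinearMap.mulRight K v))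
    (g := (LinearMap.mulRight K (blockFunctional S v)).comp (blockFunctional [b])) ?_ hy
  rintro _ ⟨u, hu, rfl⟩
  exact blockFunctional_cons_mon_mul b S hu v

theorem blockFunctional_cons_mul_mon (b : Block K) (S : List (Block K)) {e : ℕ} {y : FA K}
    (hy : y ∈ Agr K e) (he : e ≤ b.len) (r : List ℕ) :
    blockFunctional (b :: S) (y * mon K r) = b.eval (y * mon K (r.take (b.len - e))) *
      if r[b.len - e]? = some b.sep then blockFunctional S (mon K (r.drop (b.len - e + 1)))
      else 0 := by
  refine LinearMap.eqOn_span
    (f := (blockFunctional (b :: S)).comp (LinearMap.mulRight K (mon K r)))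
    (g := (LinearMap.mulRight K (if r[b.len - e]? = some b.sep then
      blockFunctional S (mon K (r.drop (b.len - e + 1))) else 0)).comp
        (b.eval.comp (LinearMap.mulRight K (mon K (r.take (b.len - e)))))) ?_ hy
  rintro _ ⟨u, rfl, rfl⟩
  simp [mon_mul, blockFunctional_mon, wordEval_cons_append_of_length_le b S he]

theorem blockFunctional_singleton_mul_xg (b : Block K) {y : FA K} (hy : y ∈ Agr K b.len) :
    blockFunctional [b] (y * xg K b.sep) = b.eval y := by
  rw [xg, blockFunctional_cons_mul_mon b [] hy le_rfl]
  simp [mon_nil, blockFunctional_nil_one]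

theorem blockFunctional_ofFn_prod {n : ℕ} (b : Fin n → Block K) (a : Fin n → FA K)
    (ha : ∀ i, a i ∈ Agr K (b i).len) :
    blockFunctional (List.ofFn b) (List.ofFn fun i => a i * xg K (b i).sep).prod =
      ∏ i, (b i).eval (a i) := by
  induction n with
  | zero => simp [blockFunctional_nil_one]
  | succ n ih =>
    rw [List.ofFn_succ, List.ofFn_succ, List.prod_cons, Fin.prod_univ_succ,
      blockFunctional_cons_mul _ _ (mul_mem_Agr (ha 0) (mon_mem_Agr [(b 0).sep]) :
        a 0 * xg K (b 0).sep ∈ Agr K ((b 0).len + 1)),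
      blockFunctional_singleton_mul_xg _ (ha 0), ih _ _ fun i => ha i.succ]

theorem blockFunctional_mon_mul_mul_eq_zero (U : Submodule K (FA K)) {M e : ℕ}
    (he : 0 < e) (heM : e < M) {z : FA K} (hz : z ∈ Agr K e)
    (hzU : ∀ l v, M ∣ l.length → mon K l * z * v ∈ U)
    (S : List (Block K)) (hS : ∀ b ∈ S, M ∣ b.len + 1 ∧ U ≤ LinearMap.ker b.eval)
    {l : List ℕ} (hl : M ∣ l.length) (v : FA K) :
    blockFunctional S (mon K l * z * v) = 0 := by
  suffices h : ∀ l r, M ∣ l.length → blockFunctional S (mon K l * z * mon K r) = 0 from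
    LinearMap.congr_fun (linearMap_ext_mon (f := (blockFunctional S).comp
      (LinearMap.mulLeft K (mon K l * z))) (g := 0) fun r => h l r hl) v
  induction S with
  | nil =>
    intro l r _
    exact blockFunctional_nil_eq_zero (by omega)
      (mul_mem_Agr (mul_mem_Agr (mon_mem_Agr l) hz) (mon_mem_Agr r))
  | cons b S ih =>
    intro l r hl
    obtain ⟨hbM, hbU⟩ := hS b List.mem_cons_self
    -- Either the first block is a prefix of `l`, or, both `l.length` and `b.len + 1` being
    -- multiples of `M`, `z` ends before the separator of the first block.
    by_cases hlb : b.len + 1 ≤ l.length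
    · rw [← List.take_append_drop (b.len + 1) l, ← mon_mul, mul_assoc, mul_assoc,
        blockFunctional_cons_mul b S (by simpa [hlb] using mon_mem_Agr (l.take (b.len + 1))),
        ← mul_assoc, ih (fun c hc => hS c (List.mem_cons_of_mem b hc)) _ r
          (by simpa using Nat.dvd_sub hl hbM), mul_zero]
    · have hgap : M ≤ b.len + 1 - l.length :=
        Nat.le_of_dvd (by omega) (Nat.dvd_sub hbM hl)
      rw [blockFunctional_cons_mul_mon b S (mul_mem_Agr (mon_mem_Agr l) hz) (by omega),
        LinearMap.mem_ker.mp (hbU (hzU l _ hl)), zero_mul]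

theorem Zset_subset_Agr (k : ℕ) : Zset K k ⊆ Agr K (100 ^ (k ^ 2) - 1) := by
  rintro _ (⟨κ, l, -, -, -, -, hl, -, rfl⟩ |
    ⟨κ, l₁, l₂, -, -, -, -, -, -, -, -, hl₁, hl₂, -, -, -, -, -, rfl⟩)
  · exact Submodule.smul_mem _ κ (hl ▸ mon_mem_Agr l)
  · exact Submodule.smul_mem _ κ (add_mem (hl₁ ▸ mon_mem_Agr l₁) (hl₂ ▸ mon_mem_Agr l₂))

theorem Bk_le_ker_blockFunctional {k : ℕ} (hk : 0 < k) (S : List (Block K))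
    (hS : ∀ b ∈ S, 100 ^ (k ^ 2) ∣ b.len + 1 ∧ Bk K k ≤ LinearMap.ker b.eval) :
    Bk K k ≤ LinearMap.ker (blockFunctional S) := by
  have hgen : ∀ l z v, 100 ^ (k ^ 2) ∣ l.length → z ∈ Zset K k → mon K l * z * v ∈ Bk K k :=
    fun l z v ⟨c, hc⟩ hz => Submodule.subset_span ⟨l, z, v, ⟨c, by rw [hc, mul_comm]⟩, hz, rfl⟩
  have h100 : 1 < 100 ^ (k ^ 2) := Nat.one_lt_pow (by positivity) (by norm_num)
  rw [Bk, Submodule.span_le]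
  rintro _ ⟨l, z, v, ⟨c, hc⟩, hz, rfl⟩
  exact blockFunctional_mon_mul_mul_eq_zero (Bk K k) (by omega) (by omega) (Zset_subset_Agr k hz)
    (fun l v hl => hgen l z v hl hz) S hS ⟨c, by rw [hc, mul_comm]⟩ v

theorem Bsum_le_ker_blockFunctional (k : ℕ) (S : List (Block K))
    (hS : ∀ b ∈ S, 100 ^ (k ^ 2) ∣ b.len + 1 ∧ Bsum K k ≤ LinearMap.ker b.eval) :
    Bsum K k ≤ LinearMap.ker (blockFunctional S) := by
  refine Finset.sum_induction _ (· ≤ LinearMap.ker (blockFunctional S))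
    (fun _ _ h₁ h₂ => by simpa [Submodule.add_eq_sup] using ⟨h₁, h₂⟩) bot_le fun i hi => ?_
  obtain ⟨hi₁, hik⟩ := Finset.mem_Icc.mp hi
  refine Bk_le_ker_blockFunctional hi₁ S fun b hb => ⟨?_, ?_⟩
  · exact (pow_dvd_pow 100 (Nat.pow_le_pow_left hik 2)).trans (hS b hb).1
  · exact (Finset.single_le_sum (fun _ _ => bot_le) hi).trans (hS b hb).2

end BlockFunctional

theorem product_not_in_Bsum_general (K : Type) [Field K] (k : ℕ)
    (n : ℕ) (a : Fin n → FA K) (p : Fin n → ℕ) (hp : ∀ i, 0 < p i)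
    (ha : ∀ i, a i ∈ Agr K (100 ^ (k ^ 2) * p i - 1))
    (hB : ∀ i, a i ∉ Bsum K k) (m : Fin n → ℕ) :
    (List.ofFn fun i => a i * xg K (m i)).prod ∉ Bsum K k := by
  choose φ hφa hφB using fun i => Submodule.exists_dual_map_eq_bot_of_notMem (hB i) inferInstance
  let b : Fin n → Block K := fun i => ⟨100 ^ (k ^ 2) * p i - 1, φ i, m i⟩
  have hker : Bsum K k ≤ LinearMap.ker (blockFunctional (List.ofFn b)) := by
    refine Bsum_le_ker_blockFunctional k _ fun c hc => ?_
    obtain ⟨i, rfl⟩ := List.mem_ofFn.mp hc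
    refine ⟨?_, LinearMap.le_ker_iff_map.mpr (hφB i)⟩
    rw [Nat.sub_add_cancel (Nat.mul_pos (by positivity) (hp i))]
    exact dvd_mul_right _ _
  have hval : blockFunctional (List.ofFn b) (List.ofFn fun i => a i * xg K (m i)).prod =
      ∏ i, φ i (a i) := blockFunctional_ofFn_prod b a ha
  intro hmem
  exact Finset.prod_ne_zero_iff.mpr (fun i _ => hφa i) (hval ▸ LinearMap.mem_ker.mp (hker hmem))

/-- Lemma 5: if each `aᵢ ∈ A(100^{k²}·pᵢ − 1)` and `aᵢ ∉ B_1 + ⋯ + B_k`, then for all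
`m_1, …, m_n` the product `a_1 x_{m_1} a_2 x_{m_2} ⋯ a_n x_{m_n}` is not in `B_1 + ⋯ + B_k`. -/
theorem product_not_in_Bsum (K : Type) [Field K] (k : ℕ) (hk : 1 ≤ k)
    (n : ℕ) (hn : 1 ≤ n) (a : Fin n → FA K) (p : Fin n → ℕ) (hp : ∀ i, 0 < p i)
    (ha : ∀ i, a i ∈ Agr K (100 ^ (k ^ 2) * p i - 1))
    (hB : ∀ i, a i ∉ Bsum K k) (m : Fin n → ℕ) :
    (List.ofFn fun i => a i * xg K (m i)).prod ∉ Bsum K k :=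
  product_not_in_Bsum_general K k n a p hp ha hB m
end
end

section
/- The quotient algebra R = A/I is locally nilpotent: every finitely generated K-subalgebra of A/I is nilpotent. -/
noncomputable section

/-! A finitely generated subalgebra of `A` lies in the span of the monomials of positive length
in finitely many letters `x_0, …, x_{k-1}`, so a product of `n` of its elements is a combination
of monomials of length at least `n` in these letters. Once `n ≥ 2·100^{k²}`, each such monomial
is a left multiple of its suffix of length `2·100^{k²}`, which lies in `W(k, 2·100^{k²}, 0)`,
hence the product lies in `I_k ⊆ I`. -/

section LongWords

variable (K : Type) [Field K]

lemma mon_append (l₁ l₂ : List ℕ) : mon K (l₁ ++ l₂) = mon K l₁ * mon K l₂ := by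
  simp [mon, MonoidAlgebra.single_mul_single]

def longWords (k n : ℕ) : Submodule K (FA K) :=
  Submodule.span K {a | ∃ l : List ℕ, n ≤ l.length ∧ (∀ i ∈ l, i < k) ∧ a = mon K l}

variable {K}

lemma longWords_anti_length {k m n : ℕ} (h : m ≤ n) : longWords K k n ≤ longWords K k m :=
  Submodule.span_mono fun _ ⟨l, hl, hlt, ha⟩ => ⟨l, h.trans hl, hlt, ha⟩

lemma longWords_mono_letters {j k n : ℕ} (h : j ≤ k) : longWords K j n ≤ longWords K k n :=
  Submodule.span_mono fun _ ⟨l, hl, hlt, ha⟩ => ⟨l, hl, fun i hi => (hlt i hi).trans_le h, ha⟩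

lemma longWords_mul_le (k m n : ℕ) :
    longWords K k m * longWords K k n ≤ longWords K k (m + n) := by
  rw [longWords, longWords, Submodule.span_mul_span]
  refine Submodule.span_le.2 ?_
  rintro _ ⟨_, ⟨l₁, hl₁, hlt₁, rfl⟩, _, ⟨l₂, hl₂, hlt₂, rfl⟩, rfl⟩
  refine Submodule.subset_span ⟨l₁ ++ l₂, ?_, ?_, (mon_append K l₁ l₂).symm⟩
  · simpa using Nat.add_le_add hl₁ hl₂
  · simpa [or_imp, forall_and] using ⟨hlt₁, hlt₂⟩

lemma list_prod_mem_longWords {k : ℕ} (l : List (FA K)) (h : ∀ b ∈ l, b ∈ longWords K k 1) :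
    l.prod ∈ longWords K k l.length := by
  induction l with
  | nil => exact Submodule.subset_span ⟨[], le_rfl, by simp, rfl⟩
  | cons a t ih =>
    rw [List.prod_cons, List.length_cons, Nat.add_comm]
    exact longWords_mul_le k 1 t.length <| Submodule.mul_mem_mul (h a List.mem_cons_self)
      (ih fun b hb => h b (List.mem_cons_of_mem a hb))

lemma adjoin_subset_longWords_one {k : ℕ} {S : Set (FA K)} (hS : S ⊆ longWords K k 1) :
    (NonUnitalAlgebra.adjoin K S : Set (FA K)) ⊆ longWords K k 1 := by
  intro a ha
  induction ha using NonUnitalAlgebra.adjoin_induction with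
  | mem x hx => exact hS hx
  | add x y _ _ hx hy => exact add_mem hx hy
  | zero => exact zero_mem _
  | mul x y _ _ hx hy =>
    exact longWords_anti_length (by omega) (longWords_mul_le k 1 1 (Submodule.mul_mem_mul hx hy))
  | smul c x _ hx => exact Submodule.smul_mem _ c hx

lemma Apos_le_iSup_longWords : Apos K ≤ ⨆ k, longWords K k 1 := by
  refine Submodule.span_le.2 ?_
  rintro _ ⟨l, hl, rfl⟩
  refine Submodule.mem_iSup_of_mem (l.sum + 1) (Submodule.subset_span ⟨l, ?_, ?_, rfl⟩)
  · exact List.length_pos_iff.2 hl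
  · exact fun i hi => Nat.lt_succ_of_le (List.le_sum_of_mem hi)

lemma exists_subset_longWords_of_subset_Apos (s : Finset (FA K))
    (hs : (s : Set (FA K)) ⊆ Apos K) : ∃ k, 0 < k ∧ (s : Set (FA K)) ⊆ longWords K k 1 := by
  have hdir : Directed (· ≤ ·) fun k => longWords K k 1 :=
    Monotone.directed_le fun _ _ => longWords_mono_letters
  have hmem : ∀ a ∈ s, ∃ k, a ∈ longWords K k 1 := fun a ha =>
    (Submodule.mem_iSup_of_directed _ hdir).1 (Apos_le_iSup_longWords (hs ha))
  choose! f hf using hmem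
  refine ⟨s.sup f + 1, Nat.succ_pos _, fun a ha => longWords_mono_letters ?_ (hf a ha)⟩
  exact (Finset.le_sup ha).trans (Nat.le_succ _)

variable (D : FA K →ₗ[K] FA K)

lemma longWords_le_Ik (k : ℕ) : longWords K k (2 * 100 ^ (k ^ 2)) ≤ Ik K D k := by
  refine Submodule.span_le.2 ?_
  rintro _ ⟨l, hl, hlt, rfl⟩
  set n := 2 * 100 ^ (k ^ 2)
  refine Submodule.subset_span ⟨mon K (l.take (l.length - n)), 1, mon K (l.drop (l.length - n)),
    Set.mem_iUnion.2 ⟨0, l.drop (l.length - n), ?_, fun i hi => hlt i (List.mem_of_mem_drop hi),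
      rfl⟩, ?_⟩
  · rw [List.length_drop, Nat.sub_sub_self hl]
  · rw [mul_one, ← mon_append, List.take_append_drop]

lemma Ik_le_Itot {k : ℕ} (hk : 1 ≤ k) : Ik K D k ≤ Itot K D :=
  le_iSup₂_of_le k hk le_rfl

end LongWords

theorem quotient_locally_nilpotent_general (K : Type) [Field K] (D : FA K →ₗ[K] FA K)
    (s : Finset (FA K)) (hs : (s : Set (FA K)) ⊆ Apos K) :
    ∃ N : ℕ, 0 < N ∧ ∀ l : List (FA K),
      (∀ b ∈ l, b ∈ NonUnitalAlgebra.adjoin K (s : Set (FA K))) →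
      N ≤ l.length → l.prod ∈ Itot K D := by
  obtain ⟨k, hk, hsk⟩ := exists_subset_longWords_of_subset_Apos s hs
  refine ⟨2 * 100 ^ (k ^ 2), by positivity, fun l hl hlen => ?_⟩
  have hprod : l.prod ∈ longWords K k l.length :=
    list_prod_mem_longWords l fun b hb => adjoin_subset_longWords_one hsk (hl b hb)
  exact Ik_le_Itot D hk (longWords_le_Ik D k (longWords_anti_length hlen hprod))

/-- The quotient algebra `R = A/I` is locally nilpotent: for every finite subset `s` of the
non-unital free algebra `A` there is `N ≥ 1` such that every product of at least `N`
elements of the non-unital subalgebra generated by `s` lies in `I`; equivalently, every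
finitely generated subalgebra of `A/I` is nilpotent. -/
theorem quotient_locally_nilpotent (K : Type) [Field K] (D : FA K →ₗ[K] FA K)
    (hD : IsDer K D) (s : Finset (FA K)) (hs : (s : Set (FA K)) ⊆ Apos K) :
    ∃ N : ℕ, 0 < N ∧ ∀ l : List (FA K),
      (∀ b ∈ l, b ∈ NonUnitalAlgebra.adjoin K (s : Set (FA K))) →
      N ≤ l.length → l.prod ∈ Itot K D :=
  quotient_locally_nilpotent_general K D s hs
end
end
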